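/- Let G be a triangle-free graph in the class W₂ with α(G) ≥ 2, and let ab be an edge of G. Then α(G \ ab) = α(G) + 1, where G \ ab is the graph obtained from G by deleting the edge ab (keeping all vertices). In particular every edge of G is α-critical. -/

import Mathlib

open Finset

section EdgeIdealPaper

variable {V : Type*} [Fintype V] [DecidableEq V]

/-- `S` is an independent set of vertices in `G`. -/
def IsIndep (G : SimpleGraph V) (S : Finset V) : Prop :=
  ∀ u ∈ S, ∀ v ∈ S, ¬ G.Adj u v

/-- `S` is a maximal independent set of the induced subgraph of `G` on `A`. -/
def IsMaxIndepIn (G : SimpleGraph V) (A S : Finset V) : Prop :=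
  S ⊆ A ∧ IsIndep G S ∧ ∀ v ∈ A, v ∉ S → ¬ IsIndep G (insert v S)

open scoped Classical in
/-- The independence number of the induced subgraph of `G` on `A`. -/
noncomputable def alphaIn (G : SimpleGraph V) (A : Finset V) : ℕ :=
  ((A.powerset).filter (fun S => IsIndep G S)).sup Finset.card

/-- The induced subgraph of `G` on `A` is well-covered. -/
def WellCoveredIn (G : SimpleGraph V) (A : Finset V) : Prop :=
  ∀ S, IsMaxIndepIn G A S → S.card = alphaIn G A

/-- The induced subgraph of `G` on `A` is in the class `W₂`. -/
def W2In (G : SimpleGraph V) (A : Finset V) : Prop :=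
  WellCoveredIn G A ∧
    ∀ x ∈ A, WellCoveredIn G (A.erase x) ∧ alphaIn G (A.erase x) = alphaIn G A

open scoped Classical in
/-- The neighborhood of a vertex `a` in `G`, as a `Finset`. -/
noncomputable def nbr (G : SimpleGraph V) (a : V) : Finset V :=
  univ.filter (fun v => G.Adj a v)

open scoped Classical in
/-- The neighborhood `N_G(S)` of a set `S` of vertices: vertices outside `S`
adjacent to some vertex of `S`. -/
noncomputable def nbrSet (G : SimpleGraph V) (S : Finset V) : Finset V :=
  univ.filter (fun v => v ∉ S ∧ ∃ u ∈ S, G.Adj u v)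

/-- The vertex set of the localization `G_S = G \ (S ∪ N_G(S))`. -/
noncomputable def loc (G : SimpleGraph V) (S : Finset V) : Finset V :=
  univ \ (S ∪ nbrSet G S)

/-- The vertex set of `G_{ab} = G \ (N_G(a) ∪ N_G(b))`. -/
noncomputable def locE (G : SimpleGraph V) (a b : V) : Finset V :=
  univ \ (nbr G a ∪ nbr G b)

/-- The induced subgraph of `G` on `A` has no isolated vertices. -/
def NoIsolatedIn (G : SimpleGraph V) (A : Finset V) : Prop :=
  ∀ v ∈ A, ∃ u ∈ A, G.Adj v u

open scoped Classical in
/-- The reduced Euler characteristic `∑_{F} (-1)^{|F|-1}` (the empty face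
contributing `-1`) of the independence complex of the induced subgraph of `G` on `A`. -/
noncomputable def indEuler (G : SimpleGraph V) (A : Finset V) : ℤ :=
  -∑ S ∈ (A.powerset).filter (fun S => IsIndep G S), (-1 : ℤ) ^ S.card

end EdgeIdealPaper

/-! Deleting one edge raises `α` by at most one. For the lower bound, an exchange argument in the
`W₂` graph produces a maximum independent set `S` whose only neighbour of `b` is `a`; then
`S ∪ {b}` is independent in `G \ ab`. -/

section MaximumIndependentSets

open SimpleGraph

variable {V : Type*} {G : SimpleGraph V} {A S : Finset V}

def IsMaximumIndepIn (G : SimpleGraph V) (A S : Finset V) : Prop :=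
  S ⊆ A ∧ IsIndep G S ∧ S.card = alphaIn G A

lemma IsIndep.mono {T : Finset V} (hS : IsIndep G S) (hTS : T ⊆ S) : IsIndep G T :=
  fun u hu v hv => hS u (hTS hu) v (hTS hv)

lemma IsIndep.anti {H : SimpleGraph V} (hHG : H ≤ G) (hS : IsIndep G S) : IsIndep H S :=
  fun u hu v hv huv => hS u hu v hv (hHG huv)

lemma isIndep_empty : IsIndep G ∅ := by
  simp [IsIndep]

lemma isIndep_singleton (v : V) : IsIndep G {v} := by
  simp [IsIndep]

lemma isIndep_insert [DecidableEq V] {v : V} :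
    IsIndep G (insert v S) ↔ IsIndep G S ∧ ∀ u ∈ S, ¬ G.Adj v u := by
  refine ⟨fun h => ⟨h.mono (subset_insert v S),
    fun u hu => h v (mem_insert_self v S) u (mem_insert_of_mem hu)⟩, ?_⟩
  rintro ⟨hS, hv⟩ u hu w hw huw
  rcases mem_insert.1 hu with rfl | huS <;> rcases mem_insert.1 hw with rfl | hwS
  · exact G.loopless.irrefl _ huw
  · exact hv _ hwS huw
  · exact hv _ huS huw.symm
  · exact hS _ huS _ hwS huw

lemma card_le_alphaIn (hSA : S ⊆ A) (hS : IsIndep G S) : S.card ≤ alphaIn G A := by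
  classical
  exact le_sup (mem_filter.2 ⟨mem_powerset.2 hSA, hS⟩)

lemma exists_isMaximumIndepIn (G : SimpleGraph V) (A : Finset V) :
    ∃ S, IsMaximumIndepIn G A S := by
  classical
  obtain ⟨S, hS, hcard⟩ := exists_mem_eq_sup _
    ⟨∅, mem_filter.2 ⟨empty_mem_powerset A, isIndep_empty⟩⟩ card
  obtain ⟨hSA, hS⟩ := mem_filter.1 hS
  exact ⟨S, mem_powerset.1 hSA, hS, hcard.symm⟩

lemma exists_isMaxIndepIn_superset [DecidableEq V] (hSA : S ⊆ A) (hS : IsIndep G S) :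
    ∃ T, S ⊆ T ∧ IsMaxIndepIn G A T := by
  classical
  obtain ⟨T, hT, hmax⟩ := (A.powerset.filter (fun T => S ⊆ T ∧ IsIndep G T)).exists_max_image
    card ⟨S, mem_filter.2 ⟨mem_powerset.2 hSA, subset_rfl, hS⟩⟩
  obtain ⟨hTA, hST, hT⟩ := mem_filter.1 hT
  refine ⟨T, hST, mem_powerset.1 hTA, hT, fun v hvA hvT hvT' => ?_⟩
  have := hmax (insert v T) (mem_filter.2 ⟨mem_powerset.2 (insert_subset hvA
    (mem_powerset.1 hTA)), hST.trans (subset_insert v T), hvT'⟩)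
  rw [card_insert_of_notMem hvT] at this
  omega

lemma WellCoveredIn.exists_isMaximumIndepIn_superset [DecidableEq V] (hG : WellCoveredIn G A)
    (hSA : S ⊆ A) (hS : IsIndep G S) : ∃ T, S ⊆ T ∧ IsMaximumIndepIn G A T := by
  obtain ⟨T, hST, hT⟩ := exists_isMaxIndepIn_superset hSA hS
  exact ⟨T, hST, hT.1, hT.2.1, hG T hT⟩

/-- `S \ {c}` extends to a maximum independent set of `G \ c`, which has `α(G \ c) = α(G)`
vertices, hence contains some `v ∉ S`; and `v` is adjacent to `c`, as otherwise `S ∪ {v}` would be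
independent. -/
lemma W2In.exists_adj_exchange [DecidableEq V] (hG : W2In G A) (hS : IsMaximumIndepIn G A S)
    {c : V} (hc : c ∈ S) : ∃ v, G.Adj c v ∧ IsMaximumIndepIn G A (insert v (S.erase c)) := by
  obtain ⟨hwc, hαc⟩ := hG.2 c (hS.1 hc)
  obtain ⟨T, hST, hTA, hT, hTcard⟩ := hwc.exists_isMaximumIndepIn_superset
    (erase_subset_erase c hS.1) (hS.2.1.mono (erase_subset c S))
  have hSpos : 0 < S.card := card_pos.2 ⟨c, hc⟩
  obtain ⟨v, hvT, hvSc⟩ : ∃ v ∈ T, v ∉ S.erase c := exists_mem_notMem_of_card_lt_card (by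
    rw [card_erase_of_mem hc, hTcard, hαc, ← hS.2.2]; omega)
  have hvA : v ∈ A := mem_of_mem_erase (hTA hvT)
  have hvS : v ∉ S := fun h => hvSc (mem_erase.2 ⟨ne_of_mem_erase (hTA hvT), h⟩)
  have hS' : IsIndep G (insert v (S.erase c)) := hT.mono (insert_subset hvT hST)
  refine ⟨v, ?_, insert_subset hvA ((erase_subset c S).trans hS.1), hS', ?_⟩
  · by_contra hcv
    have hvS_indep : IsIndep G (insert v S) := by
      refine isIndep_insert.2 ⟨hS.2.1, fun u hu => ?_⟩
      by_cases huc : u = c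
      · exact huc ▸ fun h => hcv h.symm
      · exact (isIndep_insert.1 hS').2 u (mem_erase.2 ⟨huc, hu⟩)
    have := card_le_alphaIn (insert_subset hvA hS.1) hvS_indep
    rw [card_insert_of_notMem hvS, hS.2.2] at this
    omega
  · rw [card_insert_of_notMem hvSc, card_erase_of_mem hc, ← hS.2.2]
    omega

/-- Among the maximum independent sets containing `a`, one with fewest neighbours of `b` has
`a` as its only neighbour of `b`: an exchange at any other neighbour `c` brings in a neighbour
of `c`, which by triangle-freeness is not a neighbour of `b`. -/
lemma W2In.exists_isMaximumIndepIn_adj_eq [DecidableEq V] (htf : G.CliqueFree 3)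
    (hG : W2In G A) {a : V} (ha : a ∈ A) (b : V) :
    ∃ S, IsMaximumIndepIn G A S ∧ a ∈ S ∧ ∀ c ∈ S, G.Adj b c → c = a := by
  classical
  obtain ⟨S₀, haS₀, hS₀⟩ :=
    hG.1.exists_isMaximumIndepIn_superset (singleton_subset_iff.2 ha) (isIndep_singleton a)
  obtain ⟨S, hSF, hmin⟩ := (A.powerset.filter (fun S => IsMaximumIndepIn G A S ∧ a ∈ S))
    |>.exists_min_image (fun S => (S.filter (G.Adj b)).card)
      ⟨S₀, mem_filter.2 ⟨mem_powerset.2 hS₀.1, hS₀, singleton_subset_iff.1 haS₀⟩⟩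
  obtain ⟨-, hS, haS⟩ := mem_filter.1 hSF
  refine ⟨S, hS, haS, fun c hc hbc => by_contra fun hca => ?_⟩
  obtain ⟨v, hcv, hS'⟩ := hG.exists_adj_exchange hS hc
  have hbv : ¬ G.Adj b v := fun hbv => htf {b, c, v} (is3Clique_triple_iff.2 ⟨hbc, hbv, hcv⟩)
  have hlt : ((insert v (S.erase c)).filter (G.Adj b)).card < (S.filter (G.Adj b)).card := by
    rw [filter_insert, if_neg hbv, filter_erase]
    exact card_erase_lt_of_mem (mem_filter.2 ⟨hc, hbc⟩)
  exact (hmin _ (mem_filter.2 ⟨mem_powerset.2 hS'.1, hS',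
    mem_insert_of_mem (mem_erase.2 ⟨Ne.symm hca, haS⟩)⟩)).not_gt hlt

lemma alphaIn_deleteEdges_le (G : SimpleGraph V) (A : Finset V) (a b : V) :
    alphaIn (G.deleteEdges {s(a, b)}) A ≤ alphaIn G A + 1 := by
  classical
  obtain ⟨W, hWA, hW, hcard⟩ := exists_isMaximumIndepIn (G.deleteEdges {s(a, b)}) A
  have hWa : IsIndep G (W.erase a) := fun u hu w hw huw =>
    hW u (mem_of_mem_erase hu) w (mem_of_mem_erase hw) <|
      (deleteEdges_adj ..).2 ⟨huw, by simp [ne_of_mem_erase hu, ne_of_mem_erase hw]⟩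
  calc alphaIn (G.deleteEdges {s(a, b)}) A = W.card := hcard.symm
    _ ≤ (W.erase a).card + 1 := by
      have := pred_card_le_card_erase (s := W) (a := a)
      omega
    _ ≤ alphaIn G A + 1 := by
      gcongr
      exact card_le_alphaIn ((erase_subset a W).trans hWA) hWa

lemma IsIndep.insert_deleteEdges [DecidableEq V] {a b : V} (hS : IsIndep G S)
    (hb : ∀ c ∈ S, G.Adj b c → c = a) : IsIndep (G.deleteEdges {s(a, b)}) (insert b S) := by
  refine isIndep_insert.2 ⟨hS.anti (deleteEdges_le _), fun u hu hbu => ?_⟩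
  rw [deleteEdges_adj] at hbu
  obtain rfl := hb u hu hbu.1
  exact hbu.2 (by simp [Sym2.eq_swap])

end MaximumIndependentSets

section EdgeIdealPaper

variable {V : Type*} [Fintype V] [DecidableEq V]

theorem stmt3_general (G : SimpleGraph V) (htf : G.CliqueFree 3)
    (hw2 : W2In G Finset.univ)
    (a b : V) (hab : G.Adj a b) :
    alphaIn (G.deleteEdges {s(a, b)}) Finset.univ = alphaIn G Finset.univ + 1 ∧
      alphaIn G Finset.univ < alphaIn (G.deleteEdges {s(a, b)}) Finset.univ := by
  obtain ⟨S, hS, haS, hSb⟩ := hw2.exists_isMaximumIndepIn_adj_eq htf (mem_univ a) b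
  have hbS : b ∉ S := fun hb => hS.2.1 a haS b hb hab
  have hlower : alphaIn G univ + 1 ≤ alphaIn (G.deleteEdges {s(a, b)}) univ := by
    rw [← hS.2.2, ← card_insert_of_notMem hbS]
    exact card_le_alphaIn (subset_univ _) (hS.2.1.insert_deleteEdges hSb)
  have hupper := alphaIn_deleteEdges_le G univ a b
  omega

/-- For a triangle-free graph in `W₂` with `α(G) ≥ 2`, deleting any edge `ab`
increases the independence number by exactly one; in particular every edge is
`α`-critical. -/
theorem stmt3 (G : SimpleGraph V) (htf : G.CliqueFree 3)
    (hw2 : W2In G Finset.univ) (hα : 2 ≤ alphaIn G Finset.univ)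
    (a b : V) (hab : G.Adj a b) :
    alphaIn (G.deleteEdges {s(a, b)}) Finset.univ = alphaIn G Finset.univ + 1 ∧
      alphaIn G Finset.univ < alphaIn (G.deleteEdges {s(a, b)}) Finset.univ :=
  stmt3_general G htf hw2 a b hab

end EdgeIdealPaper
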